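/- With c* > 0 and α defined by 2α := -‖ψ*‖²_{L²} + 6⟨ψ*², u_{c*} ∂_c u_{c*}⟩_{L²}, where ψ* = 2c* sech²(√c* ξ) and u_c = √(2c) sech(√c ξ), one has α = 8 c*^{3/2} > 0. -/

import Mathlib

/-!
With `y = √c ξ` one has `u_c ∂_c u_c = ½ ∂_c (u_c²) = sech² y - y sinh y / cosh³ y`, so after the
substitution `y = √c* ξ` both integrals in `2α` are `c*² / √c*` times the absolute constants
`∫ sech⁴ = 4/3`, `∫ sech⁶ = 16/15` and `∫ y sinh y / cosh⁷ y = 8/45`. Since `(tanh)' = sech²` and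
`sech² = 1 - tanh²`, the first two have antiderivatives polynomial in `tanh`; the third follows
from the second by integration by parts. Hence
`2α = 4 c*^{3/2} (-4/3 + 6 (16/15 - 8/45)) = 16 c*^{3/2}`.
-/

open MeasureTheory

noncomputable def sech (x : ℝ) : ℝ := 2 / (Real.exp x + Real.exp (-x))

/-- The soliton family `u_c(ξ) = √(2c) sech(√c ξ)`. -/
noncomputable def solitonU (c ξ : ℝ) : ℝ := Real.sqrt (2 * c) * sech (Real.sqrt c * ξ)

open Real Filter Topology

lemma sech_eq_inv_cosh (x : ℝ) : sech x = (cosh x)⁻¹ := by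
  rw [sech, cosh_eq, inv_div]

namespace Real

lemma abs_le_cosh (x : ℝ) : |x| ≤ cosh x := by
  rw [← cosh_abs]
  exact (self_le_sinh_iff.2 (abs_nonneg x)).trans (sinh_lt_cosh _).le

lemma abs_sinh_le_cosh (x : ℝ) : |sinh x| ≤ cosh x := by
  rw [abs_sinh, ← cosh_abs]
  exact (sinh_lt_cosh _).le

lemma one_add_sq_le_cosh_sq (x : ℝ) : 1 + x ^ 2 ≤ cosh x ^ 2 := by
  have h : |x| ≤ |sinh x| := by
    rw [abs_sinh]; exact self_le_sinh_iff.2 (abs_nonneg x)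
  rw [cosh_sq']
  linarith [sq_le_sq.2 h]

lemma hasDerivAt_tanh (x : ℝ) : HasDerivAt tanh (cosh x ^ 2)⁻¹ x := by
  have h := (hasDerivAt_sinh x).div (hasDerivAt_cosh x) (cosh_pos x).ne'
  rw [show cosh x * cosh x - sinh x * sinh x = 1 by nlinarith [cosh_sq x], one_div] at h
  exact h.congr_of_eventuallyEq (.of_forall fun y => tanh_eq_sinh_div_cosh y)

lemma tanh_eq_one_sub_two_div (x : ℝ) : tanh x = 1 - 2 / (exp (2 * x) + 1) := by
  have h : exp (2 * x) = exp x * exp x := by rw [← exp_add]; ring_nf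
  rw [tanh_eq_sinh_div_cosh, sinh_eq, cosh_eq, exp_neg, h]
  have := exp_pos x
  field_simp
  ring

lemma tanh_sq (x : ℝ) : tanh x ^ 2 = 1 - (cosh x ^ 2)⁻¹ := by
  have := cosh_pos x
  rw [tanh_eq_sinh_div_cosh]
  field_simp
  linarith [cosh_sq x]

lemma tendsto_tanh_atTop : Tendsto tanh atTop (𝓝 1) := by
  have h : Tendsto (fun x : ℝ => 2 / (exp (2 * x) + 1)) atTop (𝓝 0) :=
    (tendsto_atTop_add_const_right _ 1
      (tendsto_exp_atTop.comp (tendsto_id.const_mul_atTop two_pos))).const_div_atTop 2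
  simpa [funext tanh_eq_one_sub_two_div] using (tendsto_const_nhds (x := (1 : ℝ))).sub h

lemma tendsto_tanh_atBot : Tendsto tanh atBot (𝓝 (-1)) := by
  have h := (tendsto_tanh_atTop.comp tendsto_neg_atBot_atTop).neg
  simpa [Function.comp_def, tanh_neg] using h

lemma tendsto_mul_inv_cosh_pow_cocompact {n : ℕ} (hn : 2 ≤ n) :
    Tendsto (fun x => x * (cosh x ^ n)⁻¹) (cocompact ℝ) (𝓝 0) := by
  refine squeeze_zero_norm (fun x => ?_)
    (tendsto_inv_atTop_zero.comp tendsto_norm_cocompact_atTop)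
  rcases eq_or_ne x 0 with rfl | hx
  · simp
  have hc := abs_le_cosh x
  have h1 := one_le_cosh x
  have hx' : 0 < |x| := abs_pos.2 hx
  rw [Function.comp_apply, norm_mul, norm_inv, norm_pow, Real.norm_eq_abs, Real.norm_eq_abs,
    abs_of_pos (cosh_pos x), ← div_eq_mul_inv, div_le_iff₀ (by positivity)]
  calc |x| = |x|⁻¹ * |x| ^ 2 := by field_simp
    _ ≤ |x|⁻¹ * cosh x ^ n := by
        gcongr
        exact (pow_le_pow_left₀ (abs_nonneg x) hc 2).trans (pow_le_pow_right₀ h1 hn)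

end Real

lemma integrable_inv_cosh_sq : Integrable fun x => (cosh x ^ 2)⁻¹ := by
  refine integrable_inv_one_add_sq.mono' (by fun_prop) (.of_forall fun x => ?_)
  rw [norm_inv, norm_pow, Real.norm_eq_abs, abs_of_pos (cosh_pos x)]
  exact inv_anti₀ (by positivity) (one_add_sq_le_cosh_sq x)

lemma integrable_of_abs_le_inv_cosh_sq {f : ℝ → ℝ} (hf : Continuous f) {C : ℝ}
    (h : ∀ x, |f x| ≤ C * (cosh x ^ 2)⁻¹) : Integrable f :=
  (integrable_inv_cosh_sq.const_mul C).mono' hf.aestronglyMeasurable (.of_forall h)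

lemma integrable_inv_cosh_pow {n : ℕ} (hn : 2 ≤ n) : Integrable fun x => (cosh x ^ n)⁻¹ := by
  refine integrable_of_abs_le_inv_cosh_sq (C := 1)
    ((continuous_cosh.pow n).inv₀ fun x => (pow_pos (cosh_pos x) n).ne') fun x => ?_
  rw [one_mul, abs_of_pos (inv_pos.2 (pow_pos (cosh_pos x) n))]
  exact inv_anti₀ (by positivity) (pow_le_pow_right₀ (one_le_cosh x) hn)

lemma integrable_mul_sinh_div_cosh_pow {n : ℕ} (hn : 4 ≤ n) :
    Integrable fun x => x * sinh x / cosh x ^ n := by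
  refine integrable_of_abs_le_inv_cosh_sq (C := 1) ((continuous_id.mul continuous_sinh).div
    (continuous_cosh.pow n) fun x => (pow_pos (cosh_pos x) n).ne') fun x => ?_
  have hc := cosh_pos x
  rw [one_mul, abs_div, abs_mul, abs_of_pos (pow_pos hc n), div_le_iff₀ (pow_pos hc n)]
  calc |x| * |sinh x| ≤ cosh x ^ 2 := by
        rw [sq]; exact mul_le_mul (abs_le_cosh x) (abs_sinh_le_cosh x) (abs_nonneg _) hc.le
    _ = (cosh x ^ 2)⁻¹ * cosh x ^ 4 := by field_simp
    _ ≤ (cosh x ^ 2)⁻¹ * cosh x ^ n := by gcongr; exact one_le_cosh x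

lemma hasDerivAt_antideriv_inv_cosh_pow_four (x : ℝ) :
    HasDerivAt (fun x => tanh x - tanh x ^ 3 / 3) (cosh x ^ 4)⁻¹ x := by
  refine ((hasDerivAt_tanh x).sub (((hasDerivAt_tanh x).pow 3).div_const 3)).congr_deriv ?_
  rw [show cosh x ^ 4 = (cosh x ^ 2) ^ 2 by ring, ← inv_pow]
  linear_combination (-(cosh x ^ 2)⁻¹) * tanh_sq x

lemma hasDerivAt_antideriv_inv_cosh_pow_six (x : ℝ) :
    HasDerivAt (fun x => tanh x - 2 / 3 * tanh x ^ 3 + tanh x ^ 5 / 5) (cosh x ^ 6)⁻¹ x := by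
  have h := hasDerivAt_tanh x
  refine ((h.sub ((h.pow 3).const_mul (2 / 3))).add ((h.pow 5).div_const 5)).congr_deriv ?_
  rw [show cosh x ^ 6 = (cosh x ^ 2) ^ 3 by ring, ← inv_pow]
  linear_combination
    (-(cosh x ^ 2)⁻¹ * (1 - tanh x ^ 2 + (cosh x ^ 2)⁻¹)) * tanh_sq x

lemma integral_inv_cosh_pow_four : ∫ x, (cosh x ^ 4)⁻¹ = 4 / 3 := by
  have hT := tendsto_tanh_atTop; have hB := tendsto_tanh_atBot
  rw [integral_of_hasDerivAt_of_tendsto hasDerivAt_antideriv_inv_cosh_pow_four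
    (integrable_inv_cosh_pow (by norm_num)) (hB.sub ((hB.pow 3).div_const 3))
    (hT.sub ((hT.pow 3).div_const 3))]
  norm_num

lemma integral_inv_cosh_pow_six : ∫ x, (cosh x ^ 6)⁻¹ = 16 / 15 := by
  have hT := tendsto_tanh_atTop; have hB := tendsto_tanh_atBot
  rw [integral_of_hasDerivAt_of_tendsto hasDerivAt_antideriv_inv_cosh_pow_six
    (integrable_inv_cosh_pow (by norm_num))
    ((hB.sub ((hB.pow 3).const_mul _)).add ((hB.pow 5).div_const 5))
    ((hT.sub ((hT.pow 3).const_mul _)).add ((hT.pow 5).div_const 5))]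
  norm_num

lemma integral_mul_sinh_div_cosh_pow_seven : ∫ x, x * sinh x / cosh x ^ 7 = 8 / 45 := by
  have hderiv (x : ℝ) : HasDerivAt
      (fun x => (tanh x - 2 / 3 * tanh x ^ 3 + tanh x ^ 5 / 5 - x * (cosh x ^ 6)⁻¹) / 6)
      (x * sinh x / cosh x ^ 7) x := by
    have hc := (hasDerivAt_cosh x).fun_pow 6
    refine (((hasDerivAt_antideriv_inv_cosh_pow_six x).sub
      ((hasDerivAt_id x).mul (hc.inv (pow_pos (cosh_pos x) 6).ne'))).div_const 6).congr_deriv ?_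
    have := cosh_pos x
    simp only [Pi.inv_apply, id]
    field_simp
    ring
  have hT := tendsto_tanh_atTop; have hB := tendsto_tanh_atBot
  have hX := tendsto_mul_inv_cosh_pow_cocompact (n := 6) (by norm_num)
  rw [integral_of_hasDerivAt_of_tendsto hderiv (integrable_mul_sinh_div_cosh_pow (by norm_num))
    ((((hB.sub ((hB.pow 3).const_mul _)).add ((hB.pow 5).div_const 5)).sub
      (hX.mono_left atBot_le_cocompact)).div_const 6)
    ((((hT.sub ((hT.pow 3).const_mul _)).add ((hT.pow 5).div_const 5)).sub
      (hX.mono_left atTop_le_cocompact)).div_const 6)]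
  norm_num

lemma hasDerivAt_solitonU {c : ℝ} (hc : 0 < c) (ξ : ℝ) :
    HasDerivAt (fun c => solitonU c ξ)
      (√2 * ((cosh (√c * ξ))⁻¹ - √c * ξ * sinh (√c * ξ) / cosh (√c * ξ) ^ 2) / (2 * √c)) c := by
  have hg : HasDerivAt (fun s => √2 * s * (cosh (s * ξ))⁻¹)
      (√2 * ((cosh (√c * ξ))⁻¹ - √c * ξ * sinh (√c * ξ) / cosh (√c * ξ) ^ 2)) (√c) := by
    have hcosh := ((hasDerivAt_mul_const ξ).cosh).inv (cosh_pos (√c * ξ)).ne'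
    refine (((hasDerivAt_id _).const_mul √2).mul hcosh).congr_deriv ?_
    simp only [id, Pi.inv_apply]
    ring
  have h := hg.comp c (hasDerivAt_sqrt hc.ne')
  refine (h.congr_deriv (by field_simp)).congr_of_eventuallyEq (.of_forall fun c => ?_)
  simp only [solitonU, sech_eq_inv_cosh, Function.comp_apply, sqrt_mul zero_le_two]

lemma solitonU_mul_deriv_solitonU {c : ℝ} (hc : 0 < c) (ξ : ℝ) :
    solitonU c ξ * deriv (fun c => solitonU c ξ) c
      = (cosh (√c * ξ) ^ 2)⁻¹ - √c * ξ * sinh (√c * ξ) / cosh (√c * ξ) ^ 3 := by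
  have hs : 0 < √c := sqrt_pos.2 hc
  have := cosh_pos (√c * ξ)
  rw [(hasDerivAt_solitonU hc ξ).deriv, solitonU, sech_eq_inv_cosh, sqrt_mul zero_le_two]
  field_simp
  rw [sq_sqrt zero_le_two]
  ring

theorem alpha_value
    (cs : ℝ) (hcs : 0 < cs) (ψ : ℝ → ℝ) (α : ℝ)
    (hψ : ∀ ξ : ℝ, ψ ξ = 2 * cs * sech (Real.sqrt cs * ξ) ^ 2)
    (hα : 2 * α = -(∫ ξ : ℝ, (ψ ξ) ^ 2)
      + 6 * ∫ ξ : ℝ, (ψ ξ) ^ 2 * (solitonU cs ξ * deriv (fun c => solitonU c ξ) cs)) :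
    α = 8 * cs ^ ((3 : ℝ) / 2) ∧ 0 < α := by
  have ha : 0 < √cs := sqrt_pos.2 hcs
  have hψsq (ξ : ℝ) : ψ ξ ^ 2 = 4 * cs ^ 2 * (cosh (√cs * ξ) ^ 4)⁻¹ := by
    rw [hψ, sech_eq_inv_cosh]; ring
  have hψsq_mul (ξ : ℝ) : ψ ξ ^ 2 * (solitonU cs ξ * deriv (fun c => solitonU c ξ) cs)
      = 4 * cs ^ 2 * ((cosh (√cs * ξ) ^ 6)⁻¹ - √cs * ξ * sinh (√cs * ξ) / cosh (√cs * ξ) ^ 7) := by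
    have := cosh_pos (√cs * ξ)
    rw [hψsq, solitonU_mul_deriv_solitonU hcs]
    field_simp
  have hI₁ : ∫ ξ, ψ ξ ^ 2 = 4 * cs ^ 2 * ((√cs)⁻¹ * (4 / 3)) := by
    simp_rw [hψsq]
    rw [integral_const_mul, Measure.integral_comp_mul_left (fun y => (cosh y ^ 4)⁻¹),
      integral_inv_cosh_pow_four, abs_of_pos (inv_pos.2 ha), smul_eq_mul]
  have hI₂ : ∫ ξ, ψ ξ ^ 2 * (solitonU cs ξ * deriv (fun c => solitonU c ξ) cs)
      = 4 * cs ^ 2 * ((√cs)⁻¹ * (16 / 15 - 8 / 45)) := by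
    simp_rw [hψsq_mul]
    rw [integral_const_mul,
      Measure.integral_comp_mul_left (fun y => (cosh y ^ 6)⁻¹ - y * sinh y / cosh y ^ 7),
      integral_sub (integrable_inv_cosh_pow (by norm_num))
        (integrable_mul_sinh_div_cosh_pow (by norm_num)),
      integral_inv_cosh_pow_six, integral_mul_sinh_div_cosh_pow_seven,
      abs_of_pos (inv_pos.2 ha), smul_eq_mul]
  have hpow : cs ^ ((3 : ℝ) / 2) = cs ^ 2 / √cs := by
    rw [eq_div_iff ha.ne', sqrt_eq_rpow, ← rpow_add hcs]
    norm_num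
  have hα' : α = 8 * (cs ^ 2 / √cs) := by
    rw [hI₁, hI₂] at hα
    field_simp at hα ⊢
    linarith
  rw [hpow, hα']
  exact ⟨rfl, by positivity⟩
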